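/- arXiv:2306.09507 — 2 statements merged into one kernel-verified Lean document; each statement's English description precedes it below -/
import Mathlib

section
/- The winsorized mean fails subadditivity: there exist random variables X and Y (independent standard normals) and winsorizing proportions 0 < p < 1−q < 1/2 such that ρ(X+Y) > ρ(X) + ρ(Y). -/
open MeasureTheory ProbabilityTheory intervalIntegral

/-- The (left-continuous generalized inverse) quantile function of a measure on `ℝ`. -/
noncomputable def mQuantile (μ : Measure ℝ) (u : ℝ) : ℝ :=
  sInf {x : ℝ | u ≤ (μ (Set.Iic x)).toReal}

/-- Winsorized mean of a distribution `μ` on `ℝ` with proportions `p`, `q`: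
`ρ(μ) = p·F⁻¹(p) + ∫_p^{1−q} F⁻¹(u) du + q·F⁻¹(1−q)`. -/
noncomputable def winsorizedMean (μ : Measure ℝ) (p q : ℝ) : ℝ :=
  p * mQuantile μ p + (∫ u in p..(1 - q), mQuantile μ u) + q * mQuantile μ (1 - q)

/-!
Since `X + Y ∼ N(0, 2)` is the image of `N(0, 1)` under `x ↦ √2 x` and quantiles are positively
homogeneous, `ρ(X + Y) = √2 ρ(X)`. For `0 < p < 1 - q < 1/2` all quantiles entering `ρ(X)` lie
strictly below the median `0`, so `ρ(X) < 0` and hence `√2 ρ(X) > 2 ρ(X) = ρ(X) + ρ(Y)`.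
-/

open Set Filter Topology Pointwise

section Quantile

variable (μ : Measure ℝ)

lemma mQuantile_map_const_mul {c : ℝ} (hc : 0 < c) (u : ℝ) :
    mQuantile (μ.map (c * ·)) u = c * mQuantile μ u := by
  have hset : {x : ℝ | u ≤ (μ.map (c * ·) (Iic x)).toReal}
      = c • {x : ℝ | u ≤ (μ (Iic x)).toReal} := by
    ext x
    have hpre : (c * ·) ⁻¹' Iic x = Iic (c⁻¹ * x) := by
      ext t
      simp [le_inv_mul_iff₀ hc]
    rw [mem_smul_set_iff_inv_smul_mem₀ hc.ne', mem_ofPred_eq, mem_ofPred_eq,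
      Measure.map_apply (measurable_const_mul c) measurableSet_Iic, hpre, smul_eq_mul]
  rw [mQuantile, mQuantile, hset, Real.sInf_smul_of_nonneg hc.le, smul_eq_mul]

lemma winsorizedMean_map_const_mul {c : ℝ} (hc : 0 < c) (p q : ℝ) :
    winsorizedMean (μ.map (c * ·)) p q = c * winsorizedMean μ p q := by
  simp only [winsorizedMean, mQuantile_map_const_mul μ hc, intervalIntegral.integral_const_mul]
  ring

variable [IsProbabilityMeasure μ]

lemma mQuantile_eq_sInf_cdf (u : ℝ) : mQuantile μ u = sInf {x | u ≤ cdf μ x} := by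
  simp [mQuantile, cdf_eq_real, measureReal_def]

lemma mQuantile_le_of_le_cdf {u x : ℝ} (hu : 0 < u) (hx : u ≤ cdf μ x) :
    mQuantile μ u ≤ x := by
  obtain ⟨x₀, hx₀⟩ := eventually_atBot.1 ((tendsto_cdf_atBot μ).eventually (gt_mem_nhds hu))
  rw [mQuantile_eq_sInf_cdf]
  refine csInf_le ⟨x₀, fun y hy => ?_⟩ hx
  by_contra! hyx₀
  exact (hx₀ y hyx₀.le).not_ge hy

lemma continuous_cdf [NullSingletonClass μ] : Continuous (cdf μ) := by
  refine continuous_iff_continuousAt.2 fun a => continuousAt_iff_continuous_left_right.2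
    ⟨?_, (cdf μ).right_continuous a⟩
  rw [← continuousWithinAt_Iio_iff_Iic, (monotone_cdf μ).continuousWithinAt_Iio_iff_leftLim_eq]
  have h := (cdf μ).measure_singleton a
  rw [measure_cdf, measure_singleton, eq_comm, ENNReal.ofReal_eq_zero, sub_nonpos] at h
  exact le_antisymm ((monotone_cdf μ).leftLim_le le_rfl) h

lemma cdf_zero_of_map_neg [NullSingletonClass μ] (h : μ.map (fun x => -x) = μ) : cdf μ 0 = 1 / 2 := by
  have hsymm : μ.real (Ioi 0) = μ.real (Iic 0) :=
    calc μ.real (Ioi 0) = μ.real (Ici 0) := measureReal_congr Ioi_ae_eq_Ici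
      _ = (μ.map (fun x => -x)).real (Iic 0) := by
        rw [map_measureReal_apply measurable_neg measurableSet_Iic]
        simp
      _ = μ.real (Iic 0) := by rw [h]
  have htotal : μ.real (Iic 0) + μ.real (Ioi 0) = 1 := by
    rw [← compl_Iic, measureReal_add_measureReal_compl measurableSet_Iic, probReal_univ]
  rw [cdf_eq_real]
  linarith

lemma mQuantile_neg_of_map_neg [NullSingletonClass μ] (h : μ.map (fun x => -x) = μ) {u : ℝ}
    (hu₀ : 0 < u) (hu : u < 1 / 2) : mQuantile μ u < 0 := by
  rw [← cdf_zero_of_map_neg μ h] at hu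
  have hnear : ∀ᶠ x in 𝓝[<] 0, u < cdf μ x :=
    nhdsWithin_le_nhds ((continuous_cdf μ).continuousAt.eventually (lt_mem_nhds hu))
  obtain ⟨x, hux, hx⟩ := (hnear.and self_mem_nhdsWithin).exists
  exact (mQuantile_le_of_le_cdf μ hu₀ hux.le).trans_lt hx

lemma winsorizedMean_neg_of_map_neg [NullSingletonClass μ] (h : μ.map (fun x => -x) = μ) {p q : ℝ}
    (hp : 0 < p) (hpq : p < 1 - q) (hq : 1 - q < 1 / 2) : winsorizedMean μ p q < 0 := by
  have hQ : ∀ u ∈ Icc p (1 - q), mQuantile μ u < 0 := fun u hu =>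
    mQuantile_neg_of_map_neg μ h (hp.trans_le hu.1) (hu.2.trans_lt hq)
  have hint : ∫ u in p..(1 - q), mQuantile μ u ≤ 0 := by
    have := integral_nonneg (μ := volume) hpq.le fun u hu => neg_nonneg.2 (hQ u hu).le
    rwa [intervalIntegral.integral_neg, neg_nonneg] at this
  have hleft := mul_neg_of_pos_of_neg hp (hQ p ⟨le_rfl, hpq.le⟩)
  have hright := mul_neg_of_pos_of_neg (by linarith : 0 < q) (hQ (1 - q) ⟨hpq.le, le_rfl⟩)
  rw [winsorizedMean]
  linarith

end Quantile

lemma gaussianReal_zero_eq_map_sqrt_mul (v : NNReal) :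
    gaussianReal 0 v = (gaussianReal 0 1).map (√(v : ℝ) * ·) := by
  rw [gaussianReal_map_const_mul, mul_zero]
  congr
  ext
  simp

theorem winsorizedMean_add_gt_of_indepFun_gaussianReal {Ω : Type*} [MeasurableSpace Ω]
    {P : Measure Ω} {X Y : Ω → ℝ} (hXY : IndepFun X Y P) (hX : P.map X = gaussianReal 0 1)
    (hY : P.map Y = gaussianReal 0 1) {p q : ℝ} (hp : 0 < p) (hpq : p < 1 - q)
    (hq : 1 - q < 1 / 2) :
    winsorizedMean (P.map X) p q + winsorizedMean (P.map Y) p q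
      < winsorizedMean (P.map (X + Y)) p q := by
  have := nullSingletonClass_gaussianReal (μ := 0) one_ne_zero
  have hρ : winsorizedMean (gaussianReal 0 1) p q < 0 :=
    winsorizedMean_neg_of_map_neg _ (by simp [gaussianReal_map_neg]) hp hpq hq
  have hsum : P.map (X + Y) = (gaussianReal 0 1).map (√2 * ·) := by
    rw [gaussianReal_add_gaussianReal_of_indepFun hXY hX hY, zero_add, one_add_one_eq_two]
    exact_mod_cast gaussianReal_zero_eq_map_sqrt_mul 2
  have hsqrt : √2 < 2 := (Real.sqrt_lt' two_pos).2 (by norm_num)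
  rw [hsum, winsorizedMean_map_const_mul _ (by positivity), hX, hY]
  linarith [mul_lt_mul_of_neg_right hsqrt hρ]

/-- Failure of subadditivity of the winsorized mean: there exist independent
standard normal random variables `X`, `Y` and winsorizing proportions
`0 < p < 1 − q < 1/2` with `ρ(X+Y) > ρ(X) + ρ(Y)`. -/
theorem winsorizedMean_not_subadditive :
    ∃ (Ω : Type) (_ : MeasureSpace Ω) (_ : IsProbabilityMeasure (ℙ : Measure Ω))
      (X Y : Ω → ℝ) (p q : ℝ),
      IndepFun X Y ℙ ∧
      Measure.map X ℙ = gaussianReal 0 1 ∧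
      Measure.map Y ℙ = gaussianReal 0 1 ∧
      0 < p ∧ p < 1 - q ∧ 1 - q < 1/2 ∧
      winsorizedMean (Measure.map (X + Y) ℙ) p q >
        winsorizedMean (Measure.map X ℙ) p q + winsorizedMean (Measure.map Y ℙ) p q := by
  let P := (gaussianReal 0 1).prod (gaussianReal 0 1)
  have hX : P.map Prod.fst = gaussianReal 0 1 := by simp [P, Measure.map_fst_prod]
  have hY : P.map Prod.snd = gaussianReal 0 1 := by simp [P, Measure.map_snd_prod]
  have hXY : IndepFun Prod.fst Prod.snd P :=
    indepFun_prod (X := id) (Y := id) measurable_id measurable_id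
  exact ⟨ℝ × ℝ, ⟨P⟩, inferInstanceAs (IsProbabilityMeasure P), Prod.fst, Prod.snd, 1/4, 5/8,
    hXY, hX, hY, by norm_num, by norm_num, by norm_num,
    winsorizedMean_add_gt_of_indepFun_gaussianReal hXY hX hY
      (by norm_num) (by norm_num) (by norm_num)⟩
end

section
/- For an exponential random variable with quantile function F⁻¹(w) = −θ·log(1−w), the winsorized second moment equals θ²·{[log(1−p)]² + 2(1−p)[1 − log(1−p)] − 2q(1 − log q)}, i.e., p·[F⁻¹(p)]² + ∫_p^{1−q} [F⁻¹(w)]² dw + q·[F⁻¹(1−q)]² equals that expression. -/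
open MeasureTheory intervalIntegral Real

/-! The substitution `x = 1 - w` turns the middle term into `θ² ∫_q^{1-p} (log x)² dx`, and
`x ((log x)² - 2 log x + 2)` is an antiderivative of `(log x)²` away from `0`. -/

theorem hasDerivAt_mul_log_sq_sub_two_mul_log_add_two {x : ℝ} (hx : x ≠ 0) :
    HasDerivAt (fun x => x * (log x ^ 2 - 2 * log x + 2)) (log x ^ 2) x := by
  have hlog := hasDerivAt_log hx
  refine ((hasDerivAt_id' x).mul
    (((hlog.pow 2).sub (hlog.const_mul 2)).add_const 2)).congr_deriv ?_
  simp only [Pi.sub_apply, Pi.pow_apply]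
  field_simp
  ring

theorem integral_log_sq {a b : ℝ} (h : (0 : ℝ) ∉ Set.uIcc a b) :
    ∫ x in a..b, log x ^ 2 =
      b * (log b ^ 2 - 2 * log b + 2) - a * (log a ^ 2 - 2 * log a + 2) := by
  have hne : ∀ x ∈ Set.uIcc a b, x ≠ 0 := fun x hx h0 => h (h0 ▸ hx)
  refine integral_eq_sub_of_hasDerivAt
    (fun x hx => hasDerivAt_mul_log_sq_sub_two_mul_log_add_two (hne x hx)) ?_
  exact ((continuousOn_log.mono fun x hx => hne x hx).pow 2).intervalIntegrable

theorem exponential_winsorized_second_moment_general (θ p q : ℝ)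
    (hpq : p < 1 - q) (hq : 1 - q < 1) :
    p * (-θ * Real.log (1 - p))^2 +
      (∫ w in p..(1 - q), (-θ * Real.log (1 - w))^2) +
      q * (-θ * Real.log (1 - (1 - q)))^2 =
    θ^2 * ((Real.log (1 - p))^2 + 2*(1 - p)*(1 - Real.log (1 - p))
            - 2*q*(1 - Real.log q)) := by
  have hzero : (0 : ℝ) ∉ Set.uIcc q (1 - p) := by
    rw [Set.uIcc_of_le (by linarith)]
    exact fun h0 => by linarith [h0.1]
  have hint :
      ∫ w in p..(1 - q), (-θ * log (1 - w)) ^ 2 = θ ^ 2 * ∫ x in q..(1 - p), log x ^ 2 := by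
    simp_rw [mul_pow, neg_sq, intervalIntegral.integral_const_mul,
      integral_comp_sub_left (fun x => log x ^ 2), sub_sub_cancel]
  rw [hint, integral_log_sq hzero, sub_sub_cancel]
  ring

/-- The winsorized second moment of an exponential distribution with mean `θ`
(quantile function `F⁻¹(w) = −θ·log(1−w)`) equals
`θ²·{[log(1−p)]² + 2(1−p)[1 − log(1−p)] − 2q(1 − log q)}`. -/
theorem exponential_winsorized_second_moment (θ p q : ℝ) (hθ : 0 < θ)
    (hp : 0 < p) (hpq : p < 1 - q) (hq : 1 - q < 1) :
    p * (-θ * Real.log (1 - p))^2 +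
      (∫ w in p..(1 - q), (-θ * Real.log (1 - w))^2) +
      q * (-θ * Real.log (1 - (1 - q)))^2 =
    θ^2 * ((Real.log (1 - p))^2 + 2*(1 - p)*(1 - Real.log (1 - p))
            - 2*q*(1 - Real.log q)) :=
  exponential_winsorized_second_moment_general θ p q hpq hq
end
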